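/- Let A, B : ℝ^k → ℝ^n be injective linear maps. Then the distance between their images, defined as dist(im A, im B) = max over unit vectors v ∈ im A of the distance from v to im B, satisfies dist(im A, im B) ≤ ‖A − B‖ / Inj(A), where Inj(A) = min over unit vectors v ∈ ℝ^k of |Av| is the injectivity modulus of A. -/
import Mathlib


/-- For injective linear maps `A B : ℝ^k → ℝ^n`, the distance between their images,
i.e. the max over unit vectors `v ∈ im A` of the distance from `v` to `im B`,
is at most `‖A − B‖ / Inj(A)`, where `Inj(A)` is the injectivity modulus of `A`
(inf of `‖A u‖` over unit vectors `u`). -/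
theorem stmt_0 {k n : ℕ}
    (A B : EuclideanSpace ℝ (Fin k) →L[ℝ] EuclideanSpace ℝ (Fin n))
    (hA : Function.Injective A) (hB : Function.Injective B) :
    ∀ v ∈ Set.range A, ‖v‖ = 1 →
      Metric.infDist v (Set.range B) ≤
        ‖A - B‖ / sInf {r : ℝ | ∃ u : EuclideanSpace ℝ (Fin k), ‖u‖ = 1 ∧ r = ‖A u‖} := by
  intro v hv hnorm
  obtain ⟨u, rfl⟩ := hv
  set S : Set ℝ := {r : ℝ | ∃ u : EuclideanSpace ℝ (Fin k), ‖u‖ = 1 ∧ r = ‖A u‖} with hS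
  have hu0 : u ≠ 0 := by
    rintro rfl
    simp at hnorm
  have hSeq : S = (fun w => ‖A w‖) '' Metric.sphere (0 : EuclideanSpace ℝ (Fin k)) 1 := by
    ext r
    simp only [hS, Set.mem_setOf_eq, Set.mem_image, mem_sphere_zero_iff_norm, eq_comm]
  have hScpt : IsCompact S := by
    rw [hSeq]
    exact (isCompact_sphere 0 1).image (by continuity)
  have hSne : S.Nonempty := by
    refine ⟨‖A (‖u‖⁻¹ • u)‖, ‖u‖⁻¹ • u, ?_, rfl⟩
    rw [norm_smul, norm_inv, norm_norm]
    exact inv_mul_cancel₀ (norm_ne_zero_iff.mpr hu0)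
  have hSbdd : BddBelow S := by
    refine ⟨0, fun r hr => ?_⟩
    obtain ⟨w, -, rfl⟩ := hr
    positivity
  have hmem := hScpt.sInf_mem hSne
  obtain ⟨u₀, hu₀, hru₀⟩ := hmem
  set c := sInf S with hc
  have hc0 : 0 < c := by
    rw [hru₀]
    have : u₀ ≠ 0 := by
      intro h; rw [h] at hu₀; simp at hu₀
    have : A u₀ ≠ 0 := fun h => this (hA (by simpa using h))
    exact norm_pos_iff.mpr this
  have hlb : ∀ w : EuclideanSpace ℝ (Fin k), c * ‖w‖ ≤ ‖A w‖ := by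
    intro w
    rcases eq_or_ne w 0 with rfl | hw
    · simp
    · have hwn : (0:ℝ) < ‖w‖ := norm_pos_iff.mpr hw
      have : c ≤ ‖A (‖w‖⁻¹ • w)‖ := csInf_le hSbdd ⟨‖w‖⁻¹ • w, by
        rw [norm_smul, norm_inv, norm_norm]; field_simp, rfl⟩
      rw [map_smul, norm_smul, norm_inv, norm_norm] at this
      have := mul_le_mul_of_nonneg_right this hwn.le
      calc c * ‖w‖ ≤ ‖w‖⁻¹ * ‖A w‖ * ‖w‖ := this
        _ = ‖A w‖ := by field_simp
  have hcu : c * ‖u‖ ≤ 1 := by rw [← hnorm]; exact hlb u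
  have h1 : Metric.infDist (A u) (Set.range B) ≤ ‖A u - B u‖ := by
    have := Metric.infDist_le_dist_of_mem (x := A u) (Set.mem_range_self (f := B) u)
    simpa [dist_eq_norm] using this
  have h2 : ‖A u - B u‖ ≤ ‖A - B‖ * ‖u‖ := by
    have := (A - B).le_opNorm u
    simpa using this
  have h3 : ‖A - B‖ * ‖u‖ ≤ ‖A - B‖ / c := by
    rw [le_div_iff₀ hc0]
    nlinarith [norm_nonneg (A - B), norm_nonneg u]
  calc Metric.infDist (A u) (Set.range B) ≤ ‖A u - B u‖ := h1
    _ ≤ ‖A - B‖ * ‖u‖ := h2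
    _ ≤ ‖A - B‖ / c := h3
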